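/- Let (Ω,Σ) be a measurable space, and let 𝔭, 𝔮 be probability measures on Ω with 𝔭 ≪ 𝔮 and H := H(𝔭|𝔮) < ∞. Let h : Ω → (0,∞) be measurable and let p, q > 0 be real exponents with min(p,q) ≤ 1 such that ∫ h^q d𝔮 < ∞ and ∫ h^{−p} d𝔮 < ∞. Then ∫ |log h| d𝔭 ≤ 2·e^{H−1} · ( 1/min(p,q) + max( 0, log₂( (‖h‖_{L^q(𝔮)} + ‖h^{−1}‖_{L^p(𝔮)})/2 ) ) ). -/

import Mathlib

/-!
Put `m = min p q`. By the Donsker–Varadhan inequality,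
`m ∫ |log h| d𝔭 ≤ H + log ∫ exp (m |log h|) d𝔮 ≤ H + log ∫ (h^m + h^(-m)) d𝔮`.
Since `m ≤ q` and `m ≤ p`, Lyapunov's inequality bounds the last integral by
`‖h‖_q^m + ‖h⁻¹‖_p^m`, and since `m ≤ 1`, concavity of `t ↦ t^m` bounds this by
`2 ((‖h‖_q + ‖h⁻¹‖_p) / 2)^m`. It remains to divide by `m` and use `H ≥ 0` and
`H + log 2 ≤ 2 e^(H-1)`.
-/

open MeasureTheory Real

namespace Real

theorem exp_mul_abs_log_le {t : ℝ} (ht : 0 < t) (m : ℝ) :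
    exp (m * |log t|) ≤ t ^ m + t⁻¹ ^ m := by
  have h₁ : 0 ≤ t ^ m := rpow_nonneg ht.le m
  have h₂ : 0 ≤ t⁻¹ ^ m := rpow_nonneg (inv_nonneg.2 ht.le) m
  rcases le_total 0 (log t) with hlog | hlog
  · rw [abs_of_nonneg hlog, mul_comm, ← rpow_def_of_pos ht]
    linarith
  · rw [abs_of_nonpos hlog, ← log_inv, mul_comm, ← rpow_def_of_pos (inv_pos.2 ht)]
    linarith

theorem rpow_add_rpow_le_two_mul_rpow_half_add {a b m : ℝ} (ha : 0 ≤ a) (hb : 0 ≤ b)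
    (hm₀ : 0 ≤ m) (hm₁ : m ≤ 1) : a ^ m + b ^ m ≤ 2 * ((a + b) / 2) ^ m := by
  have := (concaveOn_rpow hm₀ hm₁).2 (Set.mem_Ici.2 ha) (Set.mem_Ici.2 hb)
    (by norm_num : (0 : ℝ) ≤ 1 / 2) (by norm_num : (0 : ℝ) ≤ 1 / 2) (by norm_num)
  simp only [smul_eq_mul] at this
  rw [show (a + b) / 2 = 1 / 2 * a + 1 / 2 * b by ring]
  linarith

theorem add_log_two_le_two_mul_exp_sub_one (x : ℝ) : x + log 2 ≤ 2 * exp (x - 1) := by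
  have := add_one_le_exp (x - 1 + log 2)
  rw [exp_add, exp_log two_pos] at this
  linarith

theorem le_two_mul_exp_mul_of_mul_le {I H m c : ℝ} (hm : 0 < m) (hH : 0 ≤ H)
    (hI : m * I ≤ H + log 2 + m * log c) :
    I ≤ 2 * exp (H - 1) * (1 / m + max 0 (logb 2 c)) := by
  have hlogc : log c ≤ log 2 * max 0 (logb 2 c) := by
    rw [← mul_div_cancel₀ (log c) (log_pos one_lt_two).ne', ← logb]
    exact mul_le_mul_of_nonneg_left (le_max_right _ _) (log_pos one_lt_two).le
  calc I ≤ (H + log 2) / m + log 2 * max 0 (logb 2 c) := by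
        rw [div_add' _ _ _ hm.ne', le_div_iff₀ hm]
        nlinarith
    _ ≤ (H + log 2) * (1 / m + max 0 (logb 2 c)) := by
        rw [mul_add, mul_one_div]
        gcongr
        linarith
    _ ≤ 2 * exp (H - 1) * (1 / m + max 0 (logb 2 c)) := by
        gcongr
        exact add_log_two_le_two_mul_exp_sub_one H

end Real

namespace MeasureTheory

variable {α : Type*} [MeasurableSpace α] {μ ν : Measure α}

theorem integral_pos_of_forall_pos [NeZero μ] {f : α → ℝ} (hf : ∀ x, 0 < f x)
    (hfi : Integrable f μ) : 0 < ∫ x, f x ∂μ := by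
  rw [integral_pos_iff_support_of_nonneg (fun x => (hf x).le) hfi,
    Function.support_eq_univ fun x => (hf x).ne']
  exact Measure.measure_univ_pos.2 (NeZero.ne μ)

theorem Integrable.rpow_of_le_one [IsFiniteMeasure μ] {u : α → ℝ} (hu : Integrable u μ)
    (hu₀ : 0 ≤ᵐ[μ] u) {t : ℝ} (ht₀ : 0 ≤ t) (ht₁ : t ≤ 1) :
    Integrable (fun x => u x ^ t) μ := by
  refine ((integrable_const 1).add hu).mono'
    ((continuous_rpow_const ht₀).comp_aestronglyMeasurable hu.aestronglyMeasurable) ?_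
  filter_upwards [hu₀] with x (hx : 0 ≤ u x)
  rw [norm_of_nonneg (rpow_nonneg hx t), Pi.add_apply]
  rcases le_total (u x) 1 with hx₁ | hx₁
  · linarith [rpow_le_one hx hx₁ ht₀]
  · have := rpow_le_rpow_of_exponent_le hx₁ ht₁
    rw [rpow_one] at this
    linarith

theorem integral_rpow_le_rpow_integral [IsProbabilityMeasure μ] {u : α → ℝ}
    (hu : Integrable u μ) (hu₀ : 0 ≤ᵐ[μ] u) {t : ℝ} (ht₀ : 0 ≤ t) (ht₁ : t ≤ 1) :
    ∫ x, u x ^ t ∂μ ≤ (∫ x, u x ∂μ) ^ t :=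
  (concaveOn_rpow ht₀ ht₁).le_map_integral (continuous_rpow_const ht₀).continuousOn
    isClosed_Ici hu₀ hu (hu.rpow_of_le_one hu₀ ht₀ ht₁)

theorem rpow_ae_eq_rpow_rpow_div {f : α → ℝ} (hf : 0 ≤ᵐ[μ] f) {r : ℝ} (hr : r ≠ 0)
    (s : ℝ) :
    (fun x => f x ^ s) =ᵐ[μ] fun x => (f x ^ r) ^ (s / r) := by
  filter_upwards [hf] with x hx
  rw [← rpow_mul hx, mul_div_cancel₀ s hr]

theorem Integrable.rpow_of_le [IsFiniteMeasure μ] {f : α → ℝ} (hf : 0 ≤ᵐ[μ] f) {r s : ℝ}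
    (hs : 0 ≤ s) (hsr : s ≤ r) (hfr : Integrable (fun x => f x ^ r) μ) :
    Integrable (fun x => f x ^ s) μ := by
  rcases hs.eq_or_lt with rfl | hs
  · simp
  have hr : 0 < r := hs.trans_le hsr
  refine (hfr.rpow_of_le_one ?_ (div_nonneg hs.le hr.le) ((div_le_one hr).2 hsr)).congr
    (rpow_ae_eq_rpow_rpow_div hf hr.ne' s).symm
  filter_upwards [hf] with x hx using rpow_nonneg hx r

theorem integral_rpow_le_rpow_integral_rpow [IsProbabilityMeasure μ] {f : α → ℝ}
    (hf : 0 ≤ᵐ[μ] f) {r s : ℝ} (hs : 0 ≤ s) (hsr : s ≤ r)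
    (hfr : Integrable (fun x => f x ^ r) μ) :
    ∫ x, f x ^ s ∂μ ≤ ((∫ x, f x ^ r ∂μ) ^ (1 / r)) ^ s := by
  rcases hs.eq_or_lt with rfl | hs
  · simp
  have hr : 0 < r := hs.trans_le hsr
  have hfr₀ : 0 ≤ᵐ[μ] fun x => f x ^ r := by
    filter_upwards [hf] with x hx using rpow_nonneg hx r
  rw [integral_congr_ae (rpow_ae_eq_rpow_rpow_div hf hr.ne' s),
    ← rpow_mul (integral_nonneg_of_ae hfr₀), one_div_mul_eq_div]
  exact integral_rpow_le_rpow_integral hfr hfr₀ (div_nonneg hs.le hr.le)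
    ((div_le_one hr).2 hsr)

theorem integrable_exp_mul_abs_log [IsFiniteMeasure μ] {f : α → ℝ} (hf : Measurable f)
    (hpos : ∀ x, 0 < f x) {m p q : ℝ} (hm : 0 ≤ m) (hmp : m ≤ p) (hmq : m ≤ q)
    (hfq : Integrable (fun x => f x ^ q) μ) (hfp : Integrable (fun x => (f x)⁻¹ ^ p) μ) :
    Integrable (fun x => exp (m * |log (f x)|)) μ := by
  have hφ : Integrable (fun x => f x ^ m + (f x)⁻¹ ^ m) μ :=
    (hfq.rpow_of_le (ae_of_all _ fun x => (hpos x).le) hm hmq).add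
      (hfp.rpow_of_le (ae_of_all _ fun x => (inv_pos.2 (hpos x)).le) hm hmp)
  refine hφ.mono' (hf.log.abs.const_mul m).exp.aestronglyMeasurable
    (ae_of_all _ fun x => ?_)
  rw [norm_of_nonneg (exp_pos _).le]
  exact exp_mul_abs_log_le (hpos x) m

theorem integral_exp_mul_abs_log_le [IsProbabilityMeasure μ] {f : α → ℝ}
    (hpos : ∀ x, 0 < f x) {m p q : ℝ} (hm : 0 ≤ m) (hmp : m ≤ p) (hmq : m ≤ q)
    (hfq : Integrable (fun x => f x ^ q) μ) (hfp : Integrable (fun x => (f x)⁻¹ ^ p) μ) :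
    ∫ x, exp (m * |log (f x)|) ∂μ ≤
      ((∫ x, f x ^ q ∂μ) ^ (1 / q)) ^ m + ((∫ x, (f x)⁻¹ ^ p ∂μ) ^ (1 / p)) ^ m := by
  have hf₀ : 0 ≤ᵐ[μ] f := ae_of_all _ fun x => (hpos x).le
  have hf₀' : 0 ≤ᵐ[μ] fun x => (f x)⁻¹ := ae_of_all _ fun x => (inv_pos.2 (hpos x)).le
  calc ∫ x, exp (m * |log (f x)|) ∂μ ≤ ∫ x, f x ^ m + (f x)⁻¹ ^ m ∂μ :=
        integral_mono_of_nonneg (ae_of_all _ fun x => (exp_pos _).le)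
          ((hfq.rpow_of_le hf₀ hm hmq).add (hfp.rpow_of_le hf₀' hm hmp))
          (ae_of_all _ fun x => exp_mul_abs_log_le (hpos x) m)
    _ ≤ _ := by
        rw [integral_add (hfq.rpow_of_le hf₀ hm hmq) (hfp.rpow_of_le hf₀' hm hmp)]
        exact add_le_add (integral_rpow_le_rpow_integral_rpow hf₀ hm hmq hfq)
          (integral_rpow_le_rpow_integral_rpow hf₀' hm hmp hfp)

/-- Donsker–Varadhan: this is Gibbs' inequality for `μ` against the tilted measure
`ν.tilted f`. -/
theorem integral_le_integral_llr_add_log_integral_exp [IsProbabilityMeasure μ]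
    [IsProbabilityMeasure ν] (hμν : μ ≪ ν) (hllr : Integrable (llr μ ν) μ) {f : α → ℝ}
    (hfμ : Integrable f μ) (hfν : Integrable (fun x => exp (f x)) ν) :
    ∫ x, f x ∂μ ≤ ∫ x, llr μ ν x ∂μ + log (∫ x, exp (f x) ∂ν) := by
  have := isProbabilityMeasure_tilted hfν
  have hgibbs := InformationTheory.integral_llr_add_sub_measure_univ_nonneg
    (hμν.trans (absolutelyContinuous_tilted hfν))
    (integrable_llr_tilted_right hμν hfμ hllr hfν)
  rw [integral_llr_tilted_right hμν hfμ hfν hllr] at hgibbs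
  simp only [probReal_univ] at hgibbs
  linarith

end MeasureTheory

/-- Corollary, eq. (final:bound:L1).
If `𝔭 ≪ 𝔮` are probability measures with finite relative entropy
`H = ∫ log (d𝔭/d𝔮) d𝔭`, `h` is a positive measurable function with
`h ∈ L^q(𝔮)` and `h⁻¹ ∈ L^p(𝔮)` for some `p, q > 0` with `min(p,q) ≤ 1`, then
`∫ |log h| d𝔭 ≤ 2 e^{H-1} (1/min(p,q) + (log₂((‖h‖_q + ‖h⁻¹‖_p)/2))⁺)`. -/
theorem log_integrability_corollary
    {Ω : Type*} [MeasurableSpace Ω]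
    (𝔭 𝔮 : Measure Ω) [IsProbabilityMeasure 𝔭] [IsProbabilityMeasure 𝔮]
    (hac : 𝔭 ≪ 𝔮)
    (hH : Integrable (fun x => Real.log ((𝔭.rnDeriv 𝔮 x).toReal)) 𝔭)
    (h : Ω → ℝ) (hmeas : Measurable h) (hpos : ∀ x, 0 < h x)
    (p q : ℝ) (hp : 0 < p) (hq : 0 < q) (hpq : min p q ≤ 1)
    (hhq : Integrable (fun x => h x ^ q) 𝔮)
    (hhp : Integrable (fun x => h x ^ (-p)) 𝔮) :
    ∫ x, |Real.log (h x)| ∂𝔭 ≤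
      2 * Real.exp ((∫ x, Real.log ((𝔭.rnDeriv 𝔮 x).toReal) ∂𝔭) - 1) *
        (1 / min p q +
          max 0
            (Real.logb 2
              (((∫ x, h x ^ q ∂𝔮) ^ (1 / q) + (∫ x, h x ^ (-p) ∂𝔮) ^ (1 / p)) / 2))) := by
  set m := min p q
  have hm : 0 < m := lt_min hp hq
  by_cases hlog : Integrable (fun x => |log (h x)|) 𝔭
  swap
  · rw [integral_undef hlog]
    positivity
  simp_rw [fun x => show h x ^ (-p) = (h x)⁻¹ ^ p by
    rw [rpow_neg (hpos x).le, inv_rpow (hpos x).le]] at hhp ⊢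
  set A := (∫ x, h x ^ q ∂𝔮) ^ (1 / q)
  set B := (∫ x, (h x)⁻¹ ^ p ∂𝔮) ^ (1 / p)
  have hA : 0 < A := rpow_pos_of_pos
    (integral_pos_of_forall_pos (fun x => rpow_pos_of_pos (hpos x) q) hhq) _
  have hB : 0 < B := rpow_pos_of_pos
    (integral_pos_of_forall_pos (fun x => rpow_pos_of_pos (inv_pos.2 (hpos x)) p) hhp) _
  have hexp := integrable_exp_mul_abs_log hmeas hpos hm.le (min_le_left p q)
    (min_le_right p q) hhq hhp
  have hlogZ : log (∫ x, exp (m * |log (h x)|) ∂𝔮) ≤ log 2 + m * log ((A + B) / 2) := calc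
    _ ≤ log (2 * ((A + B) / 2) ^ m) := log_le_log (integral_exp_pos hexp)
      ((integral_exp_mul_abs_log_le hpos hm.le (min_le_left p q) (min_le_right p q) hhq
        hhp).trans (rpow_add_rpow_le_two_mul_rpow_half_add hA.le hB.le hm.le hpq))
    _ = log 2 + m * log ((A + B) / 2) := by
      rw [log_mul two_ne_zero (by positivity), log_rpow (by positivity)]
  have hDV := integral_le_integral_llr_add_log_integral_exp hac hH (hlog.const_mul m) hexp
  have hgibbs := InformationTheory.integral_llr_add_sub_measure_univ_nonneg hac hH
  simp only [llr, integral_const_mul, probReal_univ, add_sub_cancel_right] at hDV hgibbs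
  exact le_two_mul_exp_mul_of_mul_le hm hgibbs (by linarith)
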